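/- Let q ≥ 2 be an integer and let l ≥ 2 be a natural number. Then the number of natural numbers n < q^l whose base-q digit sum satisfies s_q(n) ≤ (q−1)·l·(1/2 − (log l)/√l) is at most q^l · exp(−(log l)²/18). -/

import Mathlib

/-!
Exponential Markov (Chernoff) bound for the digit sum. Since the digits of a uniformly chosen
`n < q ^ l` are independent and uniform on `{0, …, q - 1}`, the generating function of `s_q` over
`[0, q ^ l)` factors as `(∑_{d < q} x ^ d) ^ l`. Pairing `d` with `q - 1 - d` writes the one-digit
factor, centred at its mean `(q - 1) / 2`, as a sum of `cosh`es, and `cosh x ≤ exp (x ^ 2 / 2)`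
gives Hoeffding's bound `q ^ l * exp (-2 l δ ^ 2)` for the lower deviation `(q - 1) l δ`.
With `δ = log l / √l` the exponent is `-2 (log l) ^ 2`.
-/

open Finset Real

theorem Finset.sum_range_mul_eq_sum_sum {M : Type*} [AddCommMonoid M] (f : ℕ → M) (m n : ℕ) :
    ∑ k ∈ range (m * n), f k = ∑ i ∈ range m, ∑ j ∈ range n, f (j + n * i) := by
  rw [← Fin.sum_univ_eq_sum_range, ← finProdFinEquiv.sum_comp, Fintype.sum_prod_type,
    ← Fin.sum_univ_eq_sum_range (fun i => ∑ j ∈ range n, f (j + n * i))]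
  refine Fintype.sum_congr _ _ fun i => ?_
  rw [← Fin.sum_univ_eq_sum_range (fun j => f (j + n * i))]
  rfl

theorem Nat.digits_sum_add_mul {b d : ℕ} (hb : 1 < b) (hd : d < b) (m : ℕ) :
    (b.digits (d + b * m)).sum = d + (b.digits m).sum := by
  by_cases h : d ≠ 0 ∨ m ≠ 0
  · rw [Nat.digits_add b hb d m hd h, List.sum_cons]
  · obtain ⟨rfl, rfl⟩ : d = 0 ∧ m = 0 := by simpa using h
    simp

theorem sum_range_pow_pow_digits_sum {R : Type*} [CommSemiring R] {b : ℕ} (hb : 1 < b) (x : R)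
    (l : ℕ) : ∑ n ∈ range (b ^ l), x ^ (b.digits n).sum = (∑ d ∈ range b, x ^ d) ^ l := by
  induction l with
  | zero => simp
  | succ l ih =>
    rw [pow_succ, Finset.sum_range_mul_eq_sum_sum, pow_succ, ← ih, Finset.sum_mul]
    refine sum_congr rfl fun i _ => ?_
    rw [Finset.mul_sum]
    refine sum_congr rfl fun d hd => ?_
    rw [Nat.digits_sum_add_mul hb (mem_range.1 hd), pow_add, mul_comm]

theorem card_filter_le_le_sum_exp {ι : Type*} (s : Finset ι) (f : ι → ℝ) (a : ℝ) {t : ℝ}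
    (ht : 0 ≤ t) : (#{i ∈ s | f i ≤ a} : ℝ) ≤ ∑ i ∈ s, exp (t * (a - f i)) := by
  rw [card_eq_sum_ones, Nat.cast_sum, sum_filter]
  refine sum_le_sum fun i _ => ?_
  split_ifs with h
  · simpa using one_le_exp (mul_nonneg ht (sub_nonneg.2 h))
  · exact (exp_pos _).le

theorem sum_range_exp_neg_mul_le (q : ℕ) (t : ℝ) :
    ∑ d ∈ range q, exp (-(t * d)) ≤ q * exp (-(t * (q - 1)) / 2 + t ^ 2 * (q - 1) ^ 2 / 8) := by
  set μ : ℝ := (q - 1) / 2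
  have hreflect : ∑ d ∈ range q, exp (-(t * d)) = ∑ d ∈ range q, exp (-(t * (2 * μ - d))) := by
    rw [← sum_range_reflect (fun d : ℕ => exp (-(t * d))) q]
    refine sum_congr rfl fun d hd => ?_
    have hdq := mem_range.1 hd
    rw [Nat.cast_sub (by omega), Nat.cast_sub (by omega)]
    congr 1
    simp only [μ]
    ring
  have hcosh :
      ∑ d ∈ range q, exp (-(t * d)) = exp (-(t * μ)) * ∑ d ∈ range q, cosh (t * (μ - d)) := by
    rw [mul_sum, ← add_halves (∑ d ∈ range q, exp (-(t * d)))]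
    nth_rewrite 2 [hreflect]
    rw [← add_div, ← sum_add_distrib, sum_div]
    refine sum_congr rfl fun d _ => ?_
    have hplus : exp (-(t * μ)) * exp (t * (μ - d)) = exp (-(t * d)) := by
      rw [← exp_add]; ring_nf
    have hminus : exp (-(t * μ)) * exp (-(t * (μ - d))) = exp (-(t * (2 * μ - d))) := by
      rw [← exp_add]; ring_nf
    rw [cosh_eq]
    linear_combination -(hplus + hminus) / 2
  have hterm : ∀ d ∈ range q, cosh (t * (μ - d)) ≤ exp (t ^ 2 * μ ^ 2 / 2) := by
    intro d hd
    have hdq : (d : ℝ) + 1 ≤ q := by exact_mod_cast mem_range.1 hd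
    refine (cosh_le_exp_half_sq _).trans (exp_le_exp.2 ?_)
    have : (μ - d) ^ 2 ≤ μ ^ 2 := by
      simp only [μ]
      nlinarith [(d.cast_nonneg : (0 : ℝ) ≤ d)]
    nlinarith [sq_nonneg t]
  calc ∑ d ∈ range q, exp (-(t * d))
      ≤ exp (-(t * μ)) * ∑ _d ∈ range q, exp (t ^ 2 * μ ^ 2 / 2) :=
        hcosh ▸ mul_le_mul_of_nonneg_left (sum_le_sum hterm) (exp_pos _).le
    _ = q * exp (-(t * (q - 1)) / 2 + t ^ 2 * (q - 1) ^ 2 / 8) := by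
        rw [sum_const, card_range, nsmul_eq_mul, mul_left_comm, ← exp_add]
        simp only [μ]
        ring_nf

theorem card_digits_sum_le_le_exp_mul_pow {b : ℕ} (hb : 1 < b) (l : ℕ) (a : ℝ) {t : ℝ}
    (ht : 0 ≤ t) :
    (#{n ∈ range (b ^ l) | ((b.digits n).sum : ℝ) ≤ a} : ℝ) ≤
      exp (t * a) * (∑ d ∈ range b, exp (-(t * d))) ^ l := by
  have hgen := sum_range_pow_pow_digits_sum hb (exp (-t)) l
  simp only [← exp_nat_mul] at hgen
  calc (#{n ∈ range (b ^ l) | ((b.digits n).sum : ℝ) ≤ a} : ℝ)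
      ≤ ∑ n ∈ range (b ^ l), exp (t * (a - (b.digits n).sum)) :=
        card_filter_le_le_sum_exp _ _ _ ht
    _ = exp (t * a) * ∑ n ∈ range (b ^ l), exp ((b.digits n).sum * -t) := by
        rw [mul_sum]
        refine sum_congr rfl fun n _ => ?_
        rw [← exp_add]
        ring_nf
    _ = exp (t * a) * (∑ d ∈ range b, exp (-(t * d))) ^ l := by
        rw [hgen]
        ring_nf

theorem card_digits_sum_le_le_pow_mul_exp {b : ℕ} (hb : 1 < b) (l : ℕ) {δ : ℝ} (hδ : 0 ≤ δ) :
    (#{n ∈ range (b ^ l) | ((b.digits n).sum : ℝ) ≤ (b - 1) * l * (1 / 2 - δ)} : ℝ) ≤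
      b ^ l * exp (-(2 * l * δ ^ 2)) := by
  have hb1 : (0 : ℝ) < b - 1 := by
    have : (1 : ℝ) < b := by exact_mod_cast hb
    linarith
  -- the minimiser of the exponent produced by the next two steps
  set t : ℝ := 4 * δ / (b - 1)
  have ht : t * (b - 1) = 4 * δ := div_mul_cancel₀ _ hb1.ne'
  calc _ ≤ exp (t * ((b - 1) * l * (1 / 2 - δ))) * (∑ d ∈ range b, exp (-(t * d))) ^ l :=
        card_digits_sum_le_le_exp_mul_pow hb l _ (by positivity)
    _ ≤ exp (t * ((b - 1) * l * (1 / 2 - δ))) *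
          (b * exp (-(t * (b - 1)) / 2 + t ^ 2 * (b - 1) ^ 2 / 8)) ^ l := by
        gcongr
        exact sum_range_exp_neg_mul_le b t
    _ = b ^ l * exp (-(2 * l * δ ^ 2)) := by
        rw [mul_pow, ← exp_nat_mul, mul_left_comm, ← exp_add]
        congr 2
        linear_combination (l * (1 / 2 - δ) - l / 2 + l * (t * (b - 1) + 4 * δ) / 8) * ht

theorem chernoff_digit_sum_log_general (q : ℕ) (hq : 2 ≤ q) (l : ℕ) :
    (((Finset.range (q ^ l)).filter fun n =>
        ((Nat.digits q n).sum : ℝ) ≤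
          (q - 1) * l * (1 / 2 - Real.log l / Real.sqrt l)).card : ℝ) ≤
      (q : ℝ) ^ l * Real.exp (-(Real.log l) ^ 2 / 18) := by
  have hδ : 0 ≤ log l / √l := div_nonneg (log_natCast_nonneg l) (sqrt_nonneg _)
  have hexponent : (l : ℝ) * (log l / √l) ^ 2 = log l ^ 2 := by
    rcases Nat.eq_zero_or_pos l with rfl | hl
    · simp
    · rw [div_pow, sq_sqrt l.cast_nonneg, mul_div_cancel₀ _ (by positivity)]
  refine (card_digits_sum_le_le_pow_mul_exp hq l hδ).trans ?_
  gcongr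
  nlinarith [sq_nonneg (log l)]

/-- Quantitative Chernoff bound with deviation `δ = (log l)/√l`: the number of
`n < q^l` with digit sum at most `(q-1) l (1/2 - (log l)/√l)` is at most
`q^l exp(-(log l)²/18)`. -/
theorem chernoff_digit_sum_log (q : ℕ) (hq : 2 ≤ q) (l : ℕ) (hl : 2 ≤ l) :
    (((Finset.range (q ^ l)).filter fun n =>
        ((Nat.digits q n).sum : ℝ) ≤
          (q - 1) * l * (1 / 2 - Real.log l / Real.sqrt l)).card : ℝ) ≤
      (q : ℝ) ^ l * Real.exp (-(Real.log l) ^ 2 / 18) :=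
  chernoff_digit_sum_log_general q hq l
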